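/- Let k ≥ 7 be an odd integer. Every cocircuit of the matroid N_k / {e_1, e_2} has at least 4 elements. -/

import Mathlib

open Set

namespace Matroid

variable {α : Type}

/-- Deletion of a set from a matroid. -/
def delete' (M : Matroid α) (D : Set α) : Matroid α := M ↾ (M.E \ D)

/-- Contraction of a set in a matroid. -/
def contract' (M : Matroid α) (C : Set α) : Matroid α := (M✶.delete' C)✶

/-- A circuit: a minimal dependent set. -/
def IsCircuit' (M : Matroid α) (C : Set α) : Prop :=
  M.Dep C ∧ ∀ D, D ⊂ C → M.Indep D

/-- A cocircuit: a circuit of the dual. -/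
def IsCocircuit' (M : Matroid α) (C : Set α) : Prop := M✶.IsCircuit' C

/-- A hyperplane: a flat whose rank is one less than the rank of the matroid. -/
def IsHyperplane (M : Matroid α) (H : Set α) : Prop :=
  M.IsFlat H ∧ ∃ I B, M.IsBasis I H ∧ M.IsBase B ∧ I.encard + 1 = B.encard

/-- A circuit-hyperplane: a set that is both a circuit and a hyperplane. -/
def IsCircuitHyperplane (M : Matroid α) (C : Set α) : Prop :=
  M.IsCircuit' C ∧ M.IsHyperplane C

/-- A free basis: a basis `B` such that `B ∪ {e}` is a circuit for every `e ∈ E(M) - B`. -/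
def IsFreeBase (M : Matroid α) (B : Set α) : Prop :=
  M.IsBase B ∧ ∀ e ∈ M.E \ B, M.IsCircuit' (insert e B)

/-- A connected matroid: the ground set is nonempty and every two distinct elements of the
ground set lie in a common circuit. -/
def IsConnected (M : Matroid α) : Prop :=
  M.E.Nonempty ∧ ∀ x ∈ M.E, ∀ y ∈ M.E, x ≠ y → ∃ C, M.IsCircuit' C ∧ x ∈ C ∧ y ∈ C

/-- `M` is a frame matroid: there is a matroid `M'` whose ground set is the union of (a copy of)
`E(M)` and a set `V` disjoint from it, such that `V` is a basis of `M'`, deleting `V` from `M'`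
yields (the copy of) `M`, and for every `e ∈ E(M)` the unique circuit of `M'` contained in
`V ∪ {e}` has at most three elements. -/
def IsFrame (M : Matroid α) : Prop :=
  ∃ (β : Type) (M' : Matroid (α ⊕ β)) (V : Set (α ⊕ β)),
    M'.Finite ∧
    M'.E = (Sum.inl '' M.E) ∪ V ∧
    Disjoint (Sum.inl '' M.E) V ∧
    M'.IsBase V ∧
    M'.delete' V = M.map Sum.inl Sum.inl_injective.injOn ∧
    ∀ e ∈ M.E, ∃ C, M'.IsCircuit' C ∧ C ⊆ insert (Sum.inl e) V ∧ C.encard ≤ 3 ∧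
      ∀ C', M'.IsCircuit' C' → C' ⊆ insert (Sum.inl e) V → C' = C

/-- `N` is a graphic matroid: there are a set `W` of vertices and an assignment of an unordered
pair of vertices to each element of the ground set, such that a subset `I` of the ground set is
independent exactly when every nonempty `J ⊆ I` uses strictly more vertices than it has edges
(i.e. the associated multigraph is a forest). -/
def IsGraphic (N : Matroid α) : Prop :=
  ∃ (W : Type) (f : α → Sym2 W),
    ∀ I : Set α, N.Indep I ↔ (I ⊆ N.E ∧ ∀ J ⊆ I, J.Nonempty →
      J.encard < {w : W | ∃ e ∈ J, w ∈ f e}.encard)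

/-- `M` is a lifted-graphic matroid: there is a matroid `M'` whose ground set is (a copy of)
`E(M)` plus one extra element `f`, such that `M' \ f = M` and `M' / f` is graphic. -/
def IsLiftedGraphic (M : Matroid α) : Prop :=
  ∃ M' : Matroid (α ⊕ Unit),
    M'.Finite ∧
    M'.E = (Sum.inl '' M.E) ∪ {Sum.inr ()} ∧
    M'.delete' {Sum.inr ()} = M.map Sum.inl Sum.inl_injective.injOn ∧
    (M'.contract' {Sum.inr ()}).IsGraphic

/-- `M` and `N` are isomorphic matroids. -/
def Iso' {β : Type} (M : Matroid α) (N : Matroid β) : Prop :=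
  ∃ (f : α → β) (hf : Set.InjOn f M.E), M.map f hf = N

end Matroid

section Graphs

/-- The edges of the graph `G_k`: `a i`, `b i`, `c i`, `d i` for `i : Fin k`
(with `i` representing the index `i+1` of the paper), together with `e1` and `e2`. -/
inductive Edge (k : ℕ) : Type where
  | a : Fin k → Edge k
  | b : Fin k → Edge k
  | c : Fin k → Edge k
  | d : Fin k → Edge k
  | e1 : Edge k
  | e2 : Edge k
deriving DecidableEq

/-- The vertices of `G_k`: `Sum.inl (i, false)` is `x_{i+1}` (so `Sum.inl (0, false)` is `s_1`),
`Sum.inl (i, true)` is `y_{i+1}` (so `Sum.inl (0, true)` is `s_2`), `Sum.inr false` is `t_1` and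
`Sum.inr true` is `t_2`.  There are `2k+2` vertices in all. -/
abbrev Vertex (k : ℕ) := (Fin k × Bool) ⊕ Bool

variable {k : ℕ}

/-- The tail of each edge of `G_k`. -/
def Edge.tail [NeZero k] : Edge k → Vertex k
  | .a i => .inl (i, false)
  | .b i => .inl (i, false)
  | .c i => .inl (i, true)
  | .d i => .inl (i, true)
  | .e1 => .inl (0, false)
  | .e2 => .inl (0, true)

/-- The head of each edge of `G_k`; the head `x_1` is the vertex `t_1 = Sum.inr false` and
the head `y_1` is the vertex `t_2 = Sum.inr true`. -/
def Edge.head [NeZero k] : Edge k → Vertex k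
  | .a i => if i + 1 = 0 then .inr false else .inl (i + 1, false)
  | .b i => if i + 1 = 0 then .inr true else .inl (i + 1, true)
  | .c i => if i + 1 = 0 then .inr false else .inl (i + 1, false)
  | .d i => if i + 1 = 0 then .inr true else .inl (i + 1, true)
  | .e1 => .inr false
  | .e2 => .inr true

/-- The set `P = {a_1, …, a_k, d_1, …, d_k}`. -/
def Pset (k : ℕ) : Set (Edge k) := {e | ∃ i, e = .a i ∨ e = .d i}

/-- The set `Q = {b_1, …, b_k, c_1, …, c_k}`. -/
def Qset (k : ℕ) : Set (Edge k) := {e | ∃ i, e = .b i ∨ e = .c i}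

/-- The last index of `Fin k`, representing the paper's index `k`. -/
def lastIdx (k : ℕ) [NeZero k] : Fin k :=
  ⟨k - 1, Nat.sub_lt (Nat.pos_of_ne_zero (NeZero.ne k)) Nat.one_pos⟩

/-- The group labels for the frame construction: `γ(a_k) = γ(b_k) = γ(c_k) = γ(d_k) = 2` and
`γ(e) = 1` for every other edge. -/
def gammaF [NeZero k] : Edge k → ℝ
  | .a i => if i = lastIdx k then 2 else 1
  | .b i => if i = lastIdx k then 2 else 1
  | .c i => if i = lastIdx k then 2 else 1
  | .d i => if i = lastIdx k then 2 else 1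
  | .e1 => 1
  | .e2 => 1

/-- The matrix `A_k` of the frame construction, with rows indexed by the vertices of `G_k` and
columns by its edges: the column of an edge `e` has entry `1` in the row of the tail of `e`,
entry `-γ(e)` in the row of the head of `e`, and `0` elsewhere. -/
def frameMatrix (k : ℕ) [NeZero k] : Matrix (Vertex k) (Edge k) ℝ :=
  fun v e => if v = e.tail then 1 else if v = e.head then -gammaF e else 0

/-- The group labels for the lifted construction: `γ(a_i) = γ(d_i) = 1` for all `i` and
`γ(e) = 0` for every other edge. -/
def gammaL : Edge k → ℝ
  | .a _ => 1
  | .d _ => 1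
  | _ => 0

/-- The matrix `A_k^L` of the lifted construction, with rows indexed by the vertices of `G_k`
together with one additional row: the column of an edge `e` has entry `1` in the row of the tail
of `e`, entry `-1` in the row of the head of `e`, entry `γ(e)` in the additional row, and `0`
elsewhere. -/
def liftMatrix (k : ℕ) [NeZero k] : Matrix (Vertex k ⊕ Unit) (Edge k) ℝ :=
  fun v e => match v with
  | .inl v => if v = e.tail then 1 else if v = e.head then -1 else 0
  | .inr _ => gammaL e

/-- `N` is the matroid on the column index set of the matrix `A` in which a set is independent
if and only if the corresponding columns of `A` are linearly independent over `ℝ`. -/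
def IsColMatroid {m n : Type} (A : Matrix m n ℝ) (N : Matroid n) : Prop :=
  N.E = Set.univ ∧
  ∀ I : Set n, N.Indep I ↔ LinearIndependent ℝ (fun e : I => fun v : m => A v (e : n))

/-- The vertex of the contracted graph `G_k / {e_1, e_2}` corresponding to a vertex of `G_k`:
`t_1` is identified with `s_1` and `t_2` with `s_2`, leaving the `2k` vertices `Fin k × Bool`. -/
def contractVertex [NeZero k] : Vertex k → Fin k × Bool
  | .inl p => p
  | .inr b => (0, b)

/-- The tail, in `G_k / {e_1, e_2}`, of an edge. -/
def Edge.ctail [NeZero k] (e : Edge k) : Fin k × Bool := contractVertex e.tail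

/-- The head, in `G_k / {e_1, e_2}`, of an edge. -/
def Edge.chead [NeZero k] (e : Edge k) : Fin k × Bool := contractVertex e.head

/-- `v` is a vertex of the subgraph of `G_k / {e_1, e_2}` formed by the edge set `S`. -/
def Touches [NeZero k] (S : Set (Edge k)) (v : Fin k × Bool) : Prop :=
  ∃ e ∈ S, e.ctail = v ∨ e.chead = v

/-- The degree of the vertex `v` in the subgraph of `G_k / {e_1, e_2}` with edge set `S`. -/
noncomputable def degreeIn [NeZero k] (S : Set (Edge k)) (v : Fin k × Bool) : ℕ :=
  {e ∈ S | e.ctail = v}.ncard + {e ∈ S | e.chead = v}.ncard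

/-- The edge set `S` forms a cycle of the multigraph `G_k / {e_1, e_2}`: the subgraph it
spans is connected and `2`-regular. -/
def IsCycleIn [NeZero k] (S : Set (Edge k)) : Prop :=
  S.Nonempty ∧ Edge.e1 ∉ S ∧ Edge.e2 ∉ S ∧
  (∀ v, Touches S v → degreeIn S v = 2) ∧
  (∀ T ⊆ S, T.Nonempty → (S \ T).Nonempty → ∃ v, Touches T v ∧ Touches (S \ T) v)

/-- The star `δ_G(v)` of a vertex `v` of the contracted graph `G_k / {e_1, e_2}`:
all edges of that graph incident with `v`. -/
def contractStar (k : ℕ) [NeZero k] (v : Fin k × Bool) : Set (Edge k) :=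
  {e | e ≠ .e1 ∧ e ≠ .e2 ∧ (e.ctail = v ∨ e.chead = v)}

/-- The star `δ(v)` of a vertex `v` of the graph `G_k`: all edges of `G_k` incident with `v`. -/
def star (k : ℕ) [NeZero k] (v : Vertex k) : Set (Edge k) :=
  {e | e.tail = v ∨ e.head = v}

end Graphs

/-!
A cocircuit of `N_k / {e_1, e_2}` is a cocircuit `C` of `N_k` avoiding `e_1` and `e_2`, so it
suffices to show that when `|C| ≤ 3` the columns of `A_k` outside `C` span every column. Let `W`
be their span. The vector `x_i - y_i` is the difference of the columns of each of the four
disjoint pairs `{a_i, c_i}`, `{b_i, d_i}`, `{a_{i-1}, b_{i-1}}`, `{c_{i-1}, d_{i-1}}`, up to a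
nonzero factor and, for `i = 1`, up to the columns of `e_1, e_2`. One of these pairs misses `C`,
so every `x_i - y_i` lies in `W`. Hence the columns of `a_i, b_i, c_i, d_i` are congruent modulo
`W`, and one of them lies outside `C`.
-/

namespace Matroid

variable {α : Type} {M : Matroid α} {X C : Set α}

lemma IsCocircuit'.not_coindep_and_disjoint_of_contract' (h : (M.contract' X).IsCocircuit' C) :
    ¬ M.Coindep C ∧ Disjoint C X := by
  have hdual : (M.contract' X)✶ = M✶ ↾ (M✶.E \ X) := dual_dual _
  obtain ⟨⟨hdep, hCE⟩, -⟩ := h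
  rw [hdual] at hdep hCE
  exact ⟨fun hC => hdep (restrict_indep_iff.2 ⟨hC, hCE⟩), subset_sdiff.1 hCE |>.2⟩

end Matroid

theorem Set.exists_notMem_of_encard_lt {α ι : Type*} [Fintype ι] {C : Set α} {f : ι → α}
    (hf : f.Injective) (hC : C.encard < Fintype.card ι) : ∃ i, f i ∉ C := by
  by_contra! h
  refine hC.not_ge ?_
  calc (Fintype.card ι : ℕ∞) = ENat.card ι := ENat.card_eq_coe_fintype_card.symm
    _ ≤ (range f).encard := hf.encard_range
    _ ≤ C.encard := encard_le_encard (range_subset_iff.2 h)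

theorem Set.exists_disjoint_of_encard_lt {α ι : Type*} [Fintype ι] {C : Set α}
    {P : ι → Set α} (hP : Pairwise (Function.onFun Disjoint P)) (hC : C.encard < Fintype.card ι) :
    ∃ i, Disjoint (P i) C := by
  by_contra! h
  choose x hxP hxC using fun i => not_disjoint_iff.1 (h i)
  have hx : x.Injective := fun i j hij => by
    by_contra hne
    exact (hP hne).ne_of_mem (hxP i) (hxP j) hij
  obtain ⟨i, hi⟩ := exists_notMem_of_encard_lt hx hC
  exact hi (hxC i)

namespace IsColMatroid

open Submodule

variable {m n : Type} {A : Matrix m n ℝ} {N : Matroid n}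

lemma indep_iff (hN : IsColMatroid A N) (I : Set n) : N.Indep I ↔ LinearIndepOn ℝ A.col I :=
  hN.2 I

lemma indep_insert_iff (hN : IsColMatroid A N) {I : Set n} {e : n} (hI : N.Indep I)
    (he : e ∉ I) : N.Indep (insert e I) ↔ A.col e ∉ span ℝ (A.col '' I) := by
  rw [hN.indep_iff, linearIndepOn_insert he, ← hN.indep_iff, and_iff_right hI]

lemma spanning_of_forall_mem_span (hN : IsColMatroid A N) {X : Set n}
    (h : ∀ e, A.col e ∈ span ℝ (A.col '' X)) : N.Spanning X := by
  have hXE : X ⊆ N.E := hN.1 ▸ subset_univ X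
  obtain ⟨I, hI⟩ := N.exists_isBasis X
  have hXI : span ℝ (A.col '' X) ≤ span ℝ (A.col '' I) := by
    refine span_le.2 (image_subset_iff.2 fun x hx => ?_)
    by_cases hxI : x ∈ I
    · exact subset_span (mem_image_of_mem _ hxI)
    by_contra hx'
    exact (hI.insert_dep ⟨hx, hxI⟩).not_indep ((hN.indep_insert_iff hI.indep hxI).2 hx')
  refine (hI.indep.isBase_of_forall_insert fun e he => ?_).spanning_of_superset hI.subset
  rw [hN.indep_insert_iff hI.indep he.2, not_not]
  exact hXI (h e)

end IsColMatroid

section FrameColumns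

open Submodule

variable {k : ℕ} [NeZero k]

lemma Edge.tail_ne_head (e : Edge k) : e.tail ≠ e.head := by
  -- `x_i = x_{i+1}` forces `k = 1`, but then `i + 1 = 0` and the head is `t_1` or `t_2`.
  cases e <;> simp only [Edge.tail, Edge.head] <;> (try split_ifs with hi) <;> simp_all <;>
    rintro rfl <;> exact hi (Subsingleton.elim _ _)

lemma gammaF_ne_zero (e : Edge k) : gammaF e ≠ 0 := by
  cases e <;> simp only [gammaF] <;> (try split_ifs) <;> norm_num

lemma frameMatrix_col (e : Edge k) :
    (frameMatrix k).col e = Pi.single e.tail 1 - gammaF e • Pi.single e.head 1 := by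
  funext v
  simp only [Matrix.col_apply, frameMatrix, Pi.sub_apply, Pi.smul_apply, Pi.single_apply,
    smul_eq_mul]
  split_ifs with h₁ h₂ <;> simp_all [e.tail_ne_head, e.tail_ne_head.symm]

noncomputable def diffXY (i : Fin k) : Vertex k → ℝ :=
  Pi.single (.inl (i, false)) 1 - Pi.single (.inl (i, true)) 1

noncomputable def diffHead (i : Fin k) : Vertex k → ℝ :=
  Pi.single (Edge.a i).head 1 - Pi.single (Edge.b i).head 1

lemma col_a_sub_col_c (i : Fin k) :
    (frameMatrix k).col (.a i) - (frameMatrix k).col (.c i) = diffXY i := by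
  simp only [frameMatrix_col, diffXY]
  exact sub_sub_sub_cancel_right _ _ _

lemma col_b_sub_col_d (i : Fin k) :
    (frameMatrix k).col (.b i) - (frameMatrix k).col (.d i) = diffXY i := by
  simp only [frameMatrix_col, diffXY]
  exact sub_sub_sub_cancel_right _ _ _

lemma col_b_sub_col_a (i : Fin k) :
    (frameMatrix k).col (.b i) - (frameMatrix k).col (.a i) = gammaF (.a i) • diffHead i := by
  simp only [frameMatrix_col, diffHead, Edge.tail, Edge.head, gammaF]
  module

lemma col_d_sub_col_c (i : Fin k) :
    (frameMatrix k).col (.d i) - (frameMatrix k).col (.c i) = gammaF (.a i) • diffHead i := by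
  simp only [frameMatrix_col, diffHead, Edge.tail, Edge.head, gammaF]
  module

/-- The heads of `a_{k}` and `b_{k}` are `t_1` and `t_2`, and `t_1 - t_2` differs from
`s_1 - s_2` by the columns of `e_1` and `e_2`. -/
lemma diffHead_sub_diffXY_mem (i : Fin k) :
    diffHead i - diffXY (i + 1) ∈
      span ℝ {(frameMatrix k).col .e1, (frameMatrix k).col .e2} := by
  by_cases hi : i + 1 = 0
  · have : diffHead i - diffXY (i + 1) = (frameMatrix k).col .e2 - (frameMatrix k).col .e1 := by
      simp only [diffHead, diffXY, frameMatrix_col, Edge.head, Edge.tail, gammaF, hi, if_true,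
        one_smul]
      abel
    rw [this]
    exact sub_mem (subset_span (by simp)) (subset_span (by simp))
  · simp [diffHead, diffXY, Edge.head, hi]

end FrameColumns

section Blocks

variable {k : ℕ}

def Edge.block (i : Fin k) : Fin 4 → Edge k := ![.a i, .b i, .c i, .d i]

lemma Edge.block_injective (i : Fin k) : (Edge.block i).Injective := by
  intro r s h
  fin_cases r <;> fin_cases s <;> simp_all [Edge.block]

lemma Edge.exists_block_eq (e : Edge k) (he1 : e ≠ .e1) (he2 : e ≠ .e2) :
    ∃ i r, Edge.block i r = e := by
  cases e with
  | a i => exact ⟨i, 0, rfl⟩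
  | b i => exact ⟨i, 1, rfl⟩
  | c i => exact ⟨i, 2, rfl⟩
  | d i => exact ⟨i, 3, rfl⟩
  | e1 => exact absurd rfl he1
  | e2 => exact absurd rfl he2

end Blocks

section FrameSpan

open Submodule

variable {k : ℕ} [NeZero k] {W : Submodule ℝ (Vertex k → ℝ)}

lemma diffHead_mem_iff (h₁ : (frameMatrix k).col .e1 ∈ W) (h₂ : (frameMatrix k).col .e2 ∈ W)
    (i : Fin k) : diffHead i ∈ W ↔ diffXY (i + 1) ∈ W := by
  have h : diffHead i - diffXY (i + 1) ∈ W :=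
    span_le.2 (pair_subset_iff.2 ⟨h₁, h₂⟩) (diffHead_sub_diffXY_mem i)
  exact ⟨fun hi => by simpa using sub_mem hi h, fun hi => by simpa using add_mem h hi⟩

lemma col_block_sub_col_block_mem (hXY : ∀ i, diffXY i ∈ W)
    (h₁ : (frameMatrix k).col .e1 ∈ W) (h₂ : (frameMatrix k).col .e2 ∈ W) (i : Fin k)
    (r s : Fin 4) :
    (frameMatrix k).col (Edge.block i r) - (frameMatrix k).col (Edge.block i s) ∈ W := by
  set col := (frameMatrix k).col
  suffices h : ∀ r, col (Edge.block i r) - col (.a i) ∈ W by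
    simpa using sub_mem (h r) (h s)
  have hb : col (.b i) - col (.a i) ∈ W := by
    rw [col_b_sub_col_a]
    exact smul_mem _ _ ((diffHead_mem_iff h₁ h₂ i).2 (hXY _))
  have hc : col (.c i) - col (.a i) ∈ W := by
    rw [← neg_sub, col_a_sub_col_c]
    exact neg_mem (hXY i)
  have hd : col (.d i) - col (.a i) ∈ W := by
    rw [← sub_add_sub_cancel _ (col (.b i)), ← neg_sub, col_b_sub_col_d]
    exact add_mem (neg_mem (hXY i)) hb
  intro r
  fin_cases r
  exacts [by simp [Edge.block], hb, hc, hd]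

variable {C : Set (Edge k)}

lemma diffXY_mem (hk : 2 ≤ k) (hC : C.encard < 4) (he1 : .e1 ∉ C) (he2 : .e2 ∉ C)
    (hW : ∀ e ∉ C, (frameMatrix k).col e ∈ W) (i : Fin k) : diffXY i ∈ W := by
  set col := (frameMatrix k).col
  obtain ⟨j, rfl⟩ : ∃ j, j + 1 = i := ⟨i - 1, sub_add_cancel i 1⟩
  have hj : j ≠ j + 1 := by
    simp only [ne_eq, left_eq_add, Fin.one_eq_zero_iff]
    omega
  let P : Fin 4 → Set (Edge k) :=
    ![{.a (j + 1), .c (j + 1)}, {.b (j + 1), .d (j + 1)}, {.a j, .b j}, {.c j, .d j}]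
  have hP : Pairwise (Function.onFun Disjoint P) := by
    intro r s hrs
    fin_cases r <;> fin_cases s <;> simp_all [P, Function.onFun]
  obtain ⟨r, hr⟩ := Set.exists_disjoint_of_encard_lt hP (by simpa using hC)
  have hcol : ∀ x ∈ P r, col x ∈ W := fun x hx => hW x (hr.notMem_of_mem_left hx)
  have hdiff := diffHead_mem_iff (hW _ he1) (hW _ he2) j
  fin_cases r
  · rw [← col_a_sub_col_c]
    exact sub_mem (hcol _ (by simp [P])) (hcol _ (by simp [P]))
  · rw [← col_b_sub_col_d]
    exact sub_mem (hcol _ (by simp [P])) (hcol _ (by simp [P]))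
  · rw [← hdiff, ← smul_mem_iff W (gammaF_ne_zero (.a j)), ← col_b_sub_col_a]
    exact sub_mem (hcol _ (by simp [P])) (hcol _ (by simp [P]))
  · rw [← hdiff, ← smul_mem_iff W (gammaF_ne_zero (.a j)), ← col_d_sub_col_c]
    exact sub_mem (hcol _ (by simp [P])) (hcol _ (by simp [P]))

theorem frameMatrix_col_mem_of_encard_lt_four (hk : 2 ≤ k) (hC : C.encard < 4)
    (he1 : .e1 ∉ C) (he2 : .e2 ∉ C)
    (hW : ∀ e ∉ C, (frameMatrix k).col e ∈ W) (e : Edge k) : (frameMatrix k).col e ∈ W := by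
  by_cases heC : e ∉ C
  · exact hW e heC
  obtain ⟨i, r, rfl⟩ := e.exists_block_eq (fun h => heC (h ▸ he1)) (fun h => heC (h ▸ he2))
  obtain ⟨s, hs⟩ := Set.exists_notMem_of_encard_lt (Edge.block_injective i) (by simpa using hC)
  rw [← sub_mem_iff_left W (hW _ hs)]
  exact col_block_sub_col_block_mem (diffXY_mem hk hC he1 he2 hW) (hW _ he1) (hW _ he2) i r s

end FrameSpan

theorem cocircuits_of_Nk_contract_large_general (k : ℕ) [NeZero k] (hk : 7 ≤ k)
    (N : Matroid (Edge k)) (hN : IsColMatroid (frameMatrix k) N) :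
    ∀ C : Set (Edge k), (N.contract' {Edge.e1, Edge.e2}).IsCocircuit' C → 4 ≤ C.encard := by
  intro C hC
  obtain ⟨hnotCoindep, hCdisj⟩ := hC.not_coindep_and_disjoint_of_contract'
  by_contra! hlt
  apply hnotCoindep
  have hCE : C ⊆ N.E := hN.1 ▸ subset_univ C
  rw [Matroid.coindep_iff_compl_spanning hCE]
  refine hN.spanning_of_forall_mem_span (frameMatrix_col_mem_of_encard_lt_four (by omega) hlt
    (hCdisj.notMem_of_mem_right (by simp)) (hCdisj.notMem_of_mem_right (by simp)) fun f hf => ?_)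
  exact Submodule.subset_span (mem_image_of_mem _ ⟨by simp [hN.1], hf⟩)

/-- Every cocircuit of `N_k / {e_1, e_2}` has at least `4` elements. -/
theorem cocircuits_of_Nk_contract_large (k : ℕ) [NeZero k] (hk : 7 ≤ k) (hodd : Odd k)
    (N : Matroid (Edge k)) (hN : IsColMatroid (frameMatrix k) N) :
    ∀ C : Set (Edge k), (N.contract' {Edge.e1, Edge.e2}).IsCocircuit' C → 4 ≤ C.encard :=
  cocircuits_of_Nk_contract_large_general k hk N hN
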